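/- Let E be a lattice monotone σ-complete effect algebra and a, b ∈ E. For the question observables q_a, q_b: the Olson-order infimum q_a ∧ q_b exists iff a ∧ b exists in E, and in that case q_a ∧ q_b = q_{a∧b}; dually q_a ∨ q_b = q_{a∨b} when a ∨ b exists. -/
import Mathlib


structure EffectAlgebra (E : Type*) where
  add : E → E → Option E
  zero : E
  one : E
  comm : ∀ a b, add a b = add b a
  assoc : ∀ a b c, (add a b).bind (fun d => add d c) = (add b c).bind (fun d => add a d)
  orth : ∀ a : E, ∃! b, add a b = some one
  pos_one : ∀ a b, add a one = some b → a = zero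

namespace EffectAlgebra

variable {E : Type*}

/-- The induced order: `a ≤ b` iff `a + c = b` for some `c`. -/
def le (EA : EffectAlgebra E) (a b : E) : Prop := ∃ c, EA.add a c = some b

/-- The orthosupplement `a'`, the unique element with `a + a' = 1`. -/
noncomputable def orthosupp (EA : EffectAlgebra E) (a : E) : E :=
  Classical.choose (EA.orth a).exists

/-- `s` is the supremum of `S` with respect to the induced order. -/
def IsSup (EA : EffectAlgebra E) (S : Set E) (s : E) : Prop :=
  (∀ x ∈ S, EA.le x s) ∧ ∀ b, (∀ x ∈ S, EA.le x b) → EA.le s b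

/-- `s` is the infimum of `S` with respect to the induced order. -/
def IsInf (EA : EffectAlgebra E) (S : Set E) (s : E) : Prop :=
  (∀ x ∈ S, EA.le s x) ∧ ∀ b, (∀ x ∈ S, EA.le b x) → EA.le b s

/-- Every increasing sequence has a supremum. -/
def MonotoneSigmaComplete (EA : EffectAlgebra E) : Prop :=
  ∀ f : ℕ → E, (∀ n, EA.le (f n) (f (n + 1))) → ∃ s, EA.IsSup (Set.range f) s

/-- A σ-lattice effect algebra: countable suprema and infima exist. -/
def SigmaLattice (EA : EffectAlgebra E) : Prop :=
  (∀ f : ℕ → E, ∃ s, EA.IsSup (Set.range f) s) ∧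
  (∀ f : ℕ → E, ∃ s, EA.IsInf (Set.range f) s)

/-- A complete lattice effect algebra: arbitrary suprema and infima exist. -/
def CompleteEA (EA : EffectAlgebra E) : Prop :=
  (∀ S : Set E, ∃ s, EA.IsSup S s) ∧ (∀ S : Set E, ∃ s, EA.IsInf S s)

/-- A lattice effect algebra: binary suprema and infima exist. -/
def LatticeEA (EA : EffectAlgebra E) : Prop :=
  (∀ a b : E, ∃ s, EA.IsSup {a, b} s) ∧ (∀ a b : E, ∃ s, EA.IsInf {a, b} s)

end EffectAlgebra

/-- Borel subsets of the real line. -/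
abbrev BorelSet := {A : Set ℝ // MeasurableSet A}

def bIio (t : ℝ) : BorelSet := ⟨Set.Iio t, measurableSet_Iio⟩
def bIic (t : ℝ) : BorelSet := ⟨Set.Iic t, measurableSet_Iic⟩

/-- An observable on a (monotone σ-complete) effect algebra: a unital,
additive map on the Borel σ-algebra preserving suprema of increasing sequences. -/
structure Observable {E : Type*} (EA : EffectAlgebra E) where
  toFun : BorelSet → E
  unital : toFun ⟨Set.univ, MeasurableSet.univ⟩ = EA.one
  additive : ∀ A B : BorelSet, Disjoint A.1 B.1 →
    EA.add (toFun A) (toFun B) = some (toFun ⟨A.1 ∪ B.1, A.2.union B.2⟩)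
  sup_cont : ∀ f : ℕ → BorelSet, (∀ n, (f n).1 ⊆ (f (n + 1)).1) →
    EA.IsSup (Set.range fun n => toFun (f n))
      (toFun ⟨⋃ n, (f n).1, MeasurableSet.iUnion (fun n => (f n).2)⟩)

namespace Observable

variable {E : Type*} {EA : EffectAlgebra E}

/-- The Olson (spectral) order on observables. -/
def OlsonLe (x y : Observable EA) : Prop :=
  ∀ t : ℝ, EA.le (y.toFun (bIio t)) (x.toFun (bIio t))

/-- An observable is bounded if `x(C) = 1` for some compact set `C`. -/
def Bounded (x : Observable EA) : Prop :=
  ∃ C : Set ℝ, ∃ hC : IsCompact C, x.toFun ⟨C, hC.measurableSet⟩ = EA.one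

/-- `x` is the question observable `q_a` of the element `a`. -/
def IsQuestion (x : Observable EA) (a : E) : Prop :=
  ∀ t : ℝ, x.toFun (bIio t) =
    if t ≤ 0 then EA.zero else if t ≤ 1 then EA.orthosupp a else EA.one

/-- The spectrum of `x` lies in `[0,1]`. -/
def SpectrumIn01 (x : Observable EA) : Prop :=
  x.toFun ⟨Set.Icc 0 1, measurableSet_Icc⟩ = EA.one

/-- `z` is the infimum of `S` in the Olson order on bounded observables. -/
def IsOlsonInf (S : Set (Observable EA)) (z : Observable EA) : Prop :=
  z.Bounded ∧ (∀ x ∈ S, z.OlsonLe x) ∧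
    ∀ w : Observable EA, w.Bounded → (∀ x ∈ S, w.OlsonLe x) → w.OlsonLe z

/-- `z` is the supremum of `S` in the Olson order on bounded observables. -/
def IsOlsonSup (S : Set (Observable EA)) (z : Observable EA) : Prop :=
  z.Bounded ∧ (∀ x ∈ S, x.OlsonLe z) ∧
    ∀ w : Observable EA, w.Bounded → (∀ x ∈ S, x.OlsonLe w) → z.OlsonLe w

end Observable
namespace EffectAlgebra

variable {E : Type*} (EA : EffectAlgebra E)

lemma orthosupp_spec (a : E) : EA.add a (EA.orthosupp a) = some EA.one :=
  Classical.choose_spec (EA.orth a).exists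

lemma orthosupp_unique {a x : E} (h : EA.add a x = some EA.one) :
    x = EA.orthosupp a := by
  obtain ⟨b, hb, hu⟩ := EA.orth a
  rw [hu x h, hu (EA.orthosupp a) (EA.orthosupp_spec a)]

lemma right_unique {a x y : E} (hx : EA.add x a = some EA.one)
    (hy : EA.add y a = some EA.one) : x = y := by
  have hx' : EA.add a x = some EA.one := by rw [EA.comm]; exact hx
  have hy' : EA.add a y = some EA.one := by rw [EA.comm]; exact hy
  rw [EA.orthosupp_unique hx', EA.orthosupp_unique hy']

lemma zero_one : EA.add EA.zero EA.one = some EA.one := by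
  obtain ⟨b, hb, _⟩ := EA.orth EA.one
  have hb0 : b = EA.zero := EA.pos_one b EA.one (by rw [EA.comm]; exact hb)
  rw [← hb0, EA.comm]; exact hb

lemma zero_add (a : E) : EA.add EA.zero a = some a := by
  have h := EA.assoc EA.zero a (EA.orthosupp a)
  rw [EA.orthosupp_spec, Option.bind_some, EA.zero_one] at h
  cases h0 : EA.add EA.zero a with
  | none => rw [h0] at h; simp at h
  | some d =>
      rw [h0, Option.bind_some] at h
      have := EA.right_unique h (EA.orthosupp_spec a)
      rw [this]

lemma add_zero (a : E) : EA.add a EA.zero = some a := by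
  rw [EA.comm]; exact EA.zero_add a

lemma le_refl (a : E) : EA.le a a := ⟨EA.zero, EA.add_zero a⟩

lemma zero_le (a : E) : EA.le EA.zero a := ⟨a, EA.zero_add a⟩

lemma le_one (a : E) : EA.le a EA.one := ⟨EA.orthosupp a, EA.orthosupp_spec a⟩

lemma orthosupp_antitone {m a : E} (h : EA.le m a) :
    EA.le (EA.orthosupp a) (EA.orthosupp m) := by
  obtain ⟨c, hc⟩ := h
  have h := EA.assoc m c (EA.orthosupp a)
  rw [hc, Option.bind_some, EA.orthosupp_spec] at h
  cases h0 : EA.add c (EA.orthosupp a) with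
  | none => rw [h0] at h; simp at h
  | some e =>
      rw [h0, Option.bind_some] at h
      have he : e = EA.orthosupp m := EA.orthosupp_unique h.symm
      exact ⟨c, by rw [EA.comm, h0, he]⟩

lemma orthosupp_orthosupp (a : E) : EA.orthosupp (EA.orthosupp a) = a := by
  have : EA.add (EA.orthosupp a) a = some EA.one := by
    rw [EA.comm]; exact EA.orthosupp_spec a
  exact (EA.orthosupp_unique this).symm

lemma orthosupp_zero : EA.orthosupp EA.zero = EA.one :=
  (EA.orthosupp_unique (EA.zero_one)).symm

lemma orthosupp_one : EA.orthosupp EA.one = EA.zero := by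
  rw [← EA.orthosupp_zero, EA.orthosupp_orthosupp]

lemma le_one_iff {x : E} (h : EA.le EA.one x) : x = EA.one := by
  obtain ⟨c, hc⟩ := h
  have hc0 : c = EA.zero := EA.pos_one c x (by rw [EA.comm]; exact hc)
  rw [hc0, EA.add_zero] at hc
  exact (Option.some_inj.mp hc).symm

end EffectAlgebra
namespace EffectAlgebra

variable {E : Type*} (EA : EffectAlgebra E)

open Classical in
/-- The value of the question observable of `c` on a set `A`. -/
noncomputable def qval (c : E) (A : Set ℝ) : E :=
  if (0:ℝ) ∈ A then (if (1:ℝ) ∈ A then EA.one else EA.orthosupp c)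
  else (if (1:ℝ) ∈ A then c else EA.zero)

lemma qval_mono (c : E) {A B : Set ℝ} (h0 : (0:ℝ) ∈ A → (0:ℝ) ∈ B)
    (h1 : (1:ℝ) ∈ A → (1:ℝ) ∈ B) : EA.le (EA.qval c A) (EA.qval c B) := by
  by_cases h0A : (0:ℝ) ∈ A <;> by_cases h1A : (1:ℝ) ∈ A <;>
    by_cases h0B : (0:ℝ) ∈ B <;> by_cases h1B : (1:ℝ) ∈ B <;>
    simp only [qval, h0A, h1A, h0B, h1B, if_true, if_false, if_pos, if_neg, not_false_iff] <;>
    first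
      | exact EA.le_refl _
      | exact EA.zero_le _
      | exact EA.le_one _
      | exact absurd (h0 h0A) h0B
      | exact absurd (h1 h1A) h1B

lemma qval_additive (c : E) {A B : Set ℝ} (h : Disjoint A B) :
    EA.add (EA.qval c A) (EA.qval c B) = some (EA.qval c (A ∪ B)) := by
  have hd : ∀ x : ℝ, x ∈ A → x ∈ B → False := fun x hA hB =>
    Set.disjoint_left.mp h hA hB
  have hcc : EA.add c (EA.orthosupp c) = some EA.one := EA.orthosupp_spec c
  have hcc' : EA.add (EA.orthosupp c) c = some EA.one := by rw [EA.comm]; exact hcc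
  by_cases h0A : (0:ℝ) ∈ A <;> by_cases h1A : (1:ℝ) ∈ A <;>
    by_cases h0B : (0:ℝ) ∈ B <;> by_cases h1B : (1:ℝ) ∈ B <;>
    first
      | exact absurd (hd 0 h0A h0B) not_false
      | exact absurd (hd 1 h1A h1B) not_false
      | simp only [qval, Set.mem_union, h0A, h1A, h0B, h1B, true_or, or_true, or_self,
          if_true, if_false, EA.zero_add, EA.add_zero, hcc, hcc']

/-- The question observable of an element `c`. -/
noncomputable def questionObs (c : E) : Observable EA where
  toFun A := EA.qval c A.1
  unital := by simp [qval]
  additive := fun A B hAB => EA.qval_additive c hAB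
  sup_cont := by
    intro f hf
    have hmono : Monotone fun n => (f n).1 := monotone_nat_of_le_succ hf
    set U : Set ℝ := ⋃ n, (f n).1 with hU
    constructor
    · rintro x ⟨n, rfl⟩
      exact EA.qval_mono c (fun h => Set.mem_iUnion.mpr ⟨n, h⟩)
        (fun h => Set.mem_iUnion.mpr ⟨n, h⟩)
    · intro v hv
      have key : ∃ N, EA.qval c (f N).1 = EA.qval c U := by
        by_cases h0 : (0:ℝ) ∈ U <;> by_cases h1 : (1:ℝ) ∈ U
        · obtain ⟨n0, hn0⟩ := Set.mem_iUnion.mp h0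
          obtain ⟨n1, hn1⟩ := Set.mem_iUnion.mp h1
          refine ⟨max n0 n1, ?_⟩
          have m0 : (0:ℝ) ∈ (f (max n0 n1)).1 := hmono (le_max_left n0 n1) hn0
          have m1 : (1:ℝ) ∈ (f (max n0 n1)).1 := hmono (le_max_right n0 n1) hn1
          simp [qval, m0, m1, h0, h1]
        · obtain ⟨n0, hn0⟩ := Set.mem_iUnion.mp h0
          refine ⟨n0, ?_⟩
          have m1 : (1:ℝ) ∉ (f n0).1 := fun hx => h1 (Set.mem_iUnion.mpr ⟨n0, hx⟩)
          simp [qval, hn0, m1, h0, h1]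
        · obtain ⟨n1, hn1⟩ := Set.mem_iUnion.mp h1
          refine ⟨n1, ?_⟩
          have m0 : (0:ℝ) ∉ (f n1).1 := fun hx => h0 (Set.mem_iUnion.mpr ⟨n1, hx⟩)
          simp [qval, hn1, m0, h0, h1]
        · refine ⟨0, ?_⟩
          have m0 : (0:ℝ) ∉ (f 0).1 := fun hx => h0 (Set.mem_iUnion.mpr ⟨0, hx⟩)
          have m1 : (1:ℝ) ∉ (f 0).1 := fun hx => h1 (Set.mem_iUnion.mpr ⟨0, hx⟩)
          simp [qval, m0, m1, h0, h1]
      obtain ⟨N, hN⟩ := key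
      have h2 := hv _ ⟨N, rfl⟩
      simp only at h2 ⊢
      rwa [hN] at h2

lemma questionObs_isQuestion (c : E) :
    (EA.questionObs c).IsQuestion c := by
  intro t
  show EA.qval c (Set.Iio t) = _
  have h0 : ((0:ℝ) ∈ Set.Iio t) ↔ ¬ (t ≤ 0) := by simp [Set.mem_Iio]
  have h1 : ((1:ℝ) ∈ Set.Iio t) ↔ ¬ (t ≤ 1) := by simp [Set.mem_Iio]
  by_cases ht0 : t ≤ 0
  · have ht1 : t ≤ 1 := ht0.trans (by norm_num)
    simp [qval, h0, h1, ht0, ht1]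
  · by_cases ht1 : t ≤ 1
    · simp [qval, h0, h1, ht0, ht1]
    · simp [qval, h0, h1, ht0, ht1]

end EffectAlgebra
namespace Observable

variable {E : Type*} {EA : EffectAlgebra E}

lemma toFun_congr (x : Observable EA) {A B : BorelSet} (h : A.1 = B.1) :
    x.toFun A = x.toFun B := congrArg x.toFun (Subtype.ext h)

lemma question_bounded {m : E} {qm : Observable EA} (hm : qm.IsQuestion m) :
    qm.Bounded := by
  refine ⟨Set.Icc 0 2, isCompact_Icc, ?_⟩
  have h0 : qm.toFun (bIio 0) = EA.zero := by
    rw [hm 0]; simp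
  have h2 : qm.toFun (bIio 2) = EA.one := by
    rw [hm 2]; norm_num
  -- step 1 : qm (Ico 0 2) = 1
  have hd1 : Disjoint (Set.Iio (0:ℝ)) (Set.Ico 0 2) := by
    rw [Set.disjoint_left]; intro x hx hx'; exact absurd hx'.1 (not_le.mpr hx)
  have hadd1 := qm.additive (bIio 0) ⟨Set.Ico 0 2, measurableSet_Ico⟩ hd1
  have hun1 : qm.toFun ⟨(bIio 0).1 ∪ Set.Ico 0 2, (bIio 0).2.union measurableSet_Ico⟩
      = qm.toFun (bIio 2) := by
    refine qm.toFun_congr ?_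
    show Set.Iio (0:ℝ) ∪ Set.Ico 0 2 = Set.Iio 2
    rw [Set.Iio_union_Ico_eq_Iio (by norm_num)]
  rw [h0, EA.zero_add, hun1, h2] at hadd1
  have hIco : qm.toFun ⟨Set.Ico 0 2, measurableSet_Ico⟩ = EA.one :=
    Option.some_inj.mp hadd1
  -- step 2 : qm (Icc 0 2) = 1
  have hd2' : Disjoint (Set.Ico (0:ℝ) 2) ({2} : Set ℝ) := by
    rw [Set.disjoint_right]; intro x hx hx'
    rw [Set.mem_singleton_iff] at hx; rw [hx] at hx'; exact absurd hx'.2 (by norm_num)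
  have hadd2 := qm.additive ⟨Set.Ico 0 2, measurableSet_Ico⟩
    ⟨{2}, measurableSet_singleton 2⟩ hd2'
  have hun2 : qm.toFun ⟨Set.Ico (0:ℝ) 2 ∪ ({2} : Set ℝ),
      measurableSet_Ico.union (measurableSet_singleton 2)⟩
      = qm.toFun ⟨Set.Icc 0 2, measurableSet_Icc⟩ := by
    refine qm.toFun_congr ?_
    show Set.Ico (0:ℝ) 2 ∪ ({2} : Set ℝ) = Set.Icc 0 2
    rw [Set.Ico_union_right (by norm_num)]
  rw [hIco, hun2] at hadd2
  have hz : qm.toFun ⟨{2}, measurableSet_singleton 2⟩ = EA.zero :=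
    EA.pos_one _ _ (by rw [EA.comm]; exact hadd2)
  rw [hz, EA.add_zero] at hadd2
  exact (Option.some_inj.mp hadd2).symm

/-- The main infimum lemma. -/
lemma isOlsonInf_of_isInf {a b m : E} (hm : EA.IsInf {a, b} m)
    {qa qb qm : Observable EA} (ha : qa.IsQuestion a) (hb : qb.IsQuestion b)
    (hq : qm.IsQuestion m) : Observable.IsOlsonInf {qa, qb} qm := by
  have hma : EA.le m a := hm.1 a (Set.mem_insert a {b})
  have hmb : EA.le m b := hm.1 b (Set.mem_insert_of_mem a rfl)
  refine ⟨question_bounded hq, ?_, ?_⟩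
  · rintro x (rfl | rfl) <;> intro t <;> rw [hq t, (by assumption : x.IsQuestion _) t] <;>
      split_ifs
    · exact EA.le_refl _
    · exact EA.orthosupp_antitone (by assumption)
    · exact EA.le_refl _
    · exact EA.le_refl _
    · exact EA.orthosupp_antitone (by assumption)
    · exact EA.le_refl _
  · intro w hw hwle t
    have h1 := hwle qa (Set.mem_insert qa {qb}) t
    have h2 := hwle qb (Set.mem_insert_of_mem qa rfl) t
    rw [ha t] at h1
    rw [hb t] at h2
    rw [hq t]
    split_ifs at h1 h2 ⊢ with ht0 ht1
    · exact EA.zero_le _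
    · -- 0 < t ≤ 1 : need m' ≤ w(Iio t), from a' ≤ u, b' ≤ u
      set u := w.toFun (bIio t)
      have hua : EA.le (EA.orthosupp u) a := by
        have := EA.orthosupp_antitone h1
        rwa [EA.orthosupp_orthosupp] at this
      have hub : EA.le (EA.orthosupp u) b := by
        have := EA.orthosupp_antitone h2
        rwa [EA.orthosupp_orthosupp] at this
      have hum : EA.le (EA.orthosupp u) m := by
        refine hm.2 _ ?_
        rintro x (rfl | rfl)
        · exact hua
        · exact hub
      have := EA.orthosupp_antitone hum
      rwa [EA.orthosupp_orthosupp] at this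
    · exact h1

/-- The main supremum lemma. -/
lemma isOlsonSup_of_isSup {a b j : E} (hj : EA.IsSup {a, b} j)
    {qa qb qj : Observable EA} (ha : qa.IsQuestion a) (hb : qb.IsQuestion b)
    (hq : qj.IsQuestion j) : Observable.IsOlsonSup {qa, qb} qj := by
  have hja : EA.le a j := hj.1 a (Set.mem_insert a {b})
  have hjb : EA.le b j := hj.1 b (Set.mem_insert_of_mem a rfl)
  refine ⟨question_bounded hq, ?_, ?_⟩
  · rintro x (rfl | rfl) <;> intro t <;> rw [hq t, (by assumption : x.IsQuestion _) t] <;>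
      split_ifs
    · exact EA.le_refl _
    · exact EA.orthosupp_antitone (by assumption)
    · exact EA.le_refl _
    · exact EA.le_refl _
    · exact EA.orthosupp_antitone (by assumption)
    · exact EA.le_refl _
  · intro w hw hwle t
    have h1 := hwle qa (Set.mem_insert qa {qb}) t
    have h2 := hwle qb (Set.mem_insert_of_mem qa rfl) t
    rw [ha t] at h1
    rw [hb t] at h2
    rw [hq t]
    split_ifs at h1 h2 ⊢ with ht0 ht1
    · exact h1
    · set u := w.toFun (bIio t)
      have hau : EA.le a (EA.orthosupp u) := by
        have := EA.orthosupp_antitone h1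
        rwa [EA.orthosupp_orthosupp] at this
      have hbu : EA.le b (EA.orthosupp u) := by
        have := EA.orthosupp_antitone h2
        rwa [EA.orthosupp_orthosupp] at this
      have hju : EA.le j (EA.orthosupp u) := by
        refine hj.2 _ ?_
        rintro x (rfl | rfl)
        · exact hau
        · exact hbu
      have := EA.orthosupp_antitone hju
      rwa [EA.orthosupp_orthosupp] at this
    · exact EA.le_one _

end Observable

/-- A spectral resolution: monotone, with infimum 0, supremum 1, left continuous. -/
def SpectralResolution {E : Type*} (EA : EffectAlgebra E) (F : ℝ → E) : Prop :=
  (∀ t s : ℝ, t < s → EA.le (F t) (F s)) ∧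
  EA.IsInf (Set.range F) EA.zero ∧
  EA.IsSup (Set.range F) EA.one ∧
  ∀ s : ℝ, EA.IsSup (F '' Set.Iio s) (F s)

/-- for question observables `q_a, q_b` on a lattice monotone
σ-complete effect algebra, the Olson infimum `q_a ∧ q_b` exists iff `a ∧ b`
exists in `E`, and then `q_a ∧ q_b = q_{a∧b}`; dually `q_a ∨ q_b = q_{a∨b}`
when `a ∨ b` exists. -/
theorem stmt18 {E : Type*} (EA : EffectAlgebra E)
    (hlat : EA.LatticeEA) (hE : EA.MonotoneSigmaComplete)
    (a b : E) (qa qb : Observable EA)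
    (ha : qa.IsQuestion a) (hb : qb.IsQuestion b) :
    ((∃ m : E, EA.IsInf {a, b} m) ↔ ∃ z : Observable EA, Observable.IsOlsonInf {qa, qb} z) ∧
    (∀ m : E, EA.IsInf {a, b} m → ∀ qm : Observable EA, qm.IsQuestion m →
      Observable.IsOlsonInf {qa, qb} qm) ∧
    ((∃ j : E, EA.IsSup {a, b} j) ↔ ∃ z : Observable EA, Observable.IsOlsonSup {qa, qb} z) ∧
    (∀ j : E, EA.IsSup {a, b} j → ∀ qj : Observable EA, qj.IsQuestion j →
      Observable.IsOlsonSup {qa, qb} qj) := by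
  refine ⟨⟨fun ⟨m, hm⟩ => ?_, fun _ => hlat.2 a b⟩,
    fun m hm qm hqm => Observable.isOlsonInf_of_isInf hm ha hb hqm,
    ⟨fun ⟨j, hj⟩ => ?_, fun _ => hlat.1 a b⟩,
    fun j hj qj hqj => Observable.isOlsonSup_of_isSup hj ha hb hqj⟩
  · exact ⟨EA.questionObs m,
      Observable.isOlsonInf_of_isInf hm ha hb (EA.questionObs_isQuestion m)⟩
  · exact ⟨EA.questionObs j,
      Observable.isOlsonSup_of_isSup hj ha hb (EA.questionObs_isQuestion j)⟩
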